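/- The restriction of h to the interior of Ξ is a homeomorphism onto E \ Γ, where Γ = {h(π/2, ξ) : ξ ∈ ℝ} is a logarithmic spiral; in particular E \ Γ is open. -/

import Mathlib

/-!
`hfun` is `exp` composed with a real-linear isomorphism `ℝ × ℝ ≃ ℂ`, hence a continuous open map,
and `hfun p = hfun q` exactly when `p - q` is an integer multiple of `(-2π, 2π)`. So `hfun` maps
every strip `a < η ≤ a + 2π` bijectively onto `ℂ \ {0}`. For `a = -3π/2` the condition `ξ < -η`
says `1 < ‖hfun‖` and the boundary line `η = π/2` goes onto `Γ`, so `hfun` is a continuous open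
bijection from `XiInt` onto `E \ Γ`.
-/

/-- The map `h(η, ξ) = exp(−√3(η + ξ) + iξ)`. -/
noncomputable def hfun (p : ℝ × ℝ) : ℂ :=
  Complex.exp ((-(Real.sqrt 3) * (p.1 + p.2) : ℝ) + Complex.I * (p.2 : ℂ))

/-- The interior of the trapezoid `Ξ`: `{(η, ξ) : −3π/2 < η < π/2, ξ < −η}`. -/
def XiInt : Set (ℝ × ℝ) :=
  {p : ℝ × ℝ | -(3 * Real.pi / 2) < p.1 ∧ p.1 < Real.pi / 2 ∧ p.2 < -p.1}

/-- The logarithmic spiral `Γ = {h(π/2, ξ) : ξ ∈ ℝ}`. -/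
noncomputable def Gammaspiral : Set ℂ :=
  Set.range (fun ξ : ℝ => hfun (Real.pi / 2, ξ))

open Set
open scoped Real

noncomputable def Set.BijOn.homeomorphOfIsOpenMap {X Y : Type*} [TopologicalSpace X]
    [TopologicalSpace Y] {f : X → Y} {s : Set X} {t : Set Y} (h : BijOn f s t)
    (hf : Continuous f) (hfo : IsOpenMap f) (hs : IsOpen s) : s ≃ₜ t :=
  (Equiv.ofBijective _ h.bijective).toHomeomorphOfContinuousOpen (hf.restrict h.mapsTo)
    (hfo.mapsToRestrict hs h.mapsTo)

noncomputable def hfunExponent : (ℝ × ℝ) ≃ₜ ℂ where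
  toFun p := ((-(√3) * (p.1 + p.2) : ℝ) + Complex.I * (p.2 : ℂ))
  invFun z := (-z.re / √3 - z.im, z.im)
  left_inv p := by
    have : √3 ≠ 0 := by positivity
    ext <;> simp [this]
  right_inv z := by
    have : √3 ≠ 0 := by positivity
    apply Complex.ext <;> simp [mul_div_cancel₀ _ this]
  continuous_toFun := by fun_prop
  continuous_invFun := by fun_prop

lemma hfun_eq_exp_comp : hfun = Complex.exp ∘ hfunExponent := rfl

lemma continuous_hfun : Continuous hfun :=
  Complex.continuous_exp.comp hfunExponent.continuous

lemma isOpenMap_hfun : IsOpenMap hfun :=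
  Complex.isOpenMap_exp.comp hfunExponent.isOpenMap

lemma hfun_eq_hfun_iff {p q : ℝ × ℝ} :
    hfun p = hfun q ↔ p.1 + p.2 = q.1 + q.2 ∧ ∃ n : ℤ, p.2 = q.2 + n * (2 * π) := by
  rw [hfun, hfun, Complex.exp_eq_exp_iff_exists_int]
  simp [Complex.ext_iff]

lemma norm_hfun (p : ℝ × ℝ) : ‖hfun p‖ = Real.exp (-√3 * (p.1 + p.2)) := by
  simp [hfun, Complex.norm_exp]

lemma one_lt_norm_hfun_iff {p : ℝ × ℝ} : 1 < ‖hfun p‖ ↔ p.1 + p.2 < 0 := by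
  rw [norm_hfun, Real.one_lt_exp_iff, neg_mul, neg_pos]
  exact smul_neg_iff_of_pos_left (α := ℝ) (β := ℝ) (by positivity)

def fundamentalStrip (a : ℝ) : Set (ℝ × ℝ) := Prod.fst ⁻¹' Ioc a (a + 2 * π)

lemma injOn_hfun_fundamentalStrip (a : ℝ) : InjOn hfun (fundamentalStrip a) := by
  intro p hp q hq h
  obtain ⟨hsum, n, hn⟩ := hfun_eq_hfun_iff.1 h
  have hp1 : p.1 = q.1 - n • (2 * π) := by
    rw [zsmul_eq_mul]
    linarith
  have hp' : q.1 - n • (2 * π) ∈ Ioc a (a + 2 * π) := hp1 ▸ hp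
  have hq' : q.1 - (0 : ℤ) • (2 * π) ∈ Ioc a (a + 2 * π) := by
    rw [zero_smul, sub_zero]
    exact hq
  obtain rfl : n = 0 := (existsUnique_sub_zsmul_mem_Ioc Real.two_pi_pos q.1 a).unique hp' hq'
  simp only [Int.cast_zero, zero_mul, add_zero] at hn
  exact Prod.ext (by linarith) hn

lemma surjOn_hfun_fundamentalStrip (a : ℝ) : SurjOn hfun (fundamentalStrip a) {0}ᶜ := by
  intro v hv
  set p := hfunExponent.symm (Complex.log v)
  have hp : hfun p = v := by
    rw [hfun_eq_exp_comp, Function.comp_apply, Homeomorph.apply_symm_apply, Complex.exp_log hv]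
  set n := toIocDiv Real.two_pi_pos a p.1
  refine ⟨(p.1 - n • (2 * π), p.2 + n • (2 * π)), sub_toIocDiv_zsmul_mem_Ioc _ _ _, ?_⟩
  rw [← hp, hfun_eq_hfun_iff]
  exact ⟨by ring, n, by rw [zsmul_eq_mul]⟩

lemma isOpen_XiInt : IsOpen XiInt :=
  (isOpen_lt continuous_const continuous_fst).inter
    ((isOpen_lt continuous_fst continuous_const).inter (isOpen_lt continuous_snd continuous_fst.neg))

lemma bijOn_hfun_XiInt : BijOn hfun XiInt ({v : ℂ | 1 < ‖v‖} \ Gammaspiral) := by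
  have hstrip : XiInt ⊆ fundamentalStrip (-(3 * π / 2)) :=
    fun p ⟨h1, h2, _⟩ => ⟨h1, by linarith⟩
  have hinj := injOn_hfun_fundamentalStrip (-(3 * π / 2))
  refine ⟨?_, hinj.mono hstrip, ?_⟩
  · rintro p hp
    refine ⟨one_lt_norm_hfun_iff.2 (by linarith [hp.2.2]), ?_⟩
    rintro ⟨ξ, hξ⟩
    have hΓ : (π / 2, ξ) ∈ fundamentalStrip (-(3 * π / 2)) :=
      ⟨by linarith [Real.pi_pos], by linarith⟩
    have := congrArg Prod.fst (hinj hΓ (hstrip hp) hξ)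
    linarith [hp.2.1]
  · rintro v ⟨hv, hΓ⟩
    have hv0 : v ≠ 0 := norm_pos_iff.1 (one_pos.trans hv)
    obtain ⟨p, ⟨hp1, hp2⟩, rfl⟩ := surjOn_hfun_fundamentalStrip (-(3 * π / 2)) hv0
    refine ⟨p, ⟨hp1, lt_of_le_of_ne (by linarith) fun h => hΓ ⟨p.2, by rw [← h]⟩,
      by linarith [one_lt_norm_hfun_iff.1 hv]⟩, rfl⟩

/-- `h` restricted to the interior of `Ξ` is a homeomorphism onto
`E \ Γ`, where `E = {|v| > 1}`; in particular `E \ Γ` is open. -/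
theorem hfun_interior_homeomorphism :
    IsOpen ({v : ℂ | 1 < ‖v‖} \ Gammaspiral) ∧
    ∃ e : XiInt ≃ₜ ({v : ℂ | 1 < ‖v‖} \ Gammaspiral : Set ℂ),
      ∀ p : XiInt, (e p : ℂ) = hfun (p : ℝ × ℝ) :=
  ⟨bijOn_hfun_XiInt.image_eq ▸ isOpenMap_hfun _ isOpen_XiInt,
    bijOn_hfun_XiInt.homeomorphOfIsOpenMap continuous_hfun isOpenMap_hfun isOpen_XiInt,
    fun _ => rfl⟩
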